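/- Comparison for the finite BBGKY hierarchy: let N ≥ 2 and let F^(k) : [0,∞)×[0,1]^k → [0,∞), 1 ≤ k ≤ N, be nonnegative continuous functions, with F^(k) :≡ 0 for k > N. For Φ : [0,1]^{k+1} → ℝ define R Φ(x_1,…,x_k) := Σ_{i=1}^k ∫_0^1 Φ(x_1,…,x_k,z) p(2/N²,x_i,z) dz, and for Φ : [0,1]^k → ℝ define Q Φ(x_1,…,x_k) := Σ_{1≤i<j≤k} Φ(x_1,…,x_k) p(2/N²,x_i,x_j). Suppose that for every 1 ≤ k ≤ N, t ≥ 0 and x⃗ ∈ [0,1]^k, F^(k)(t,x⃗) = P^(k)_t F^(k)(0,·)(x⃗) − ∫_0^t P^(k)_{t−s}( R F^(k+1)(s,·) + (1/N) Q F^(k)(s,·) )(x⃗) ds. Then F^(k)(t,x⃗) ≤ P^(k)_t F^(k)(0,·)(x⃗) for every 1 ≤ k ≤ N, t ≥ 0 and x⃗ ∈ [0,1]^k; in particular sup_{x⃗} F^(k)(t,x⃗) ≤ sup_{x⃗} F^(k)(0,x⃗). -/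

import Mathlib

/-!
The Duhamel term is nonnegative: `R`, `Q` and the heat semigroup all preserve nonnegativity, and
the hierarchy closes at level `N` because `F⁽ᴺ⁺¹⁾ = 0`. Hence `F⁽ᵏ⁾(t) ≤ P_t F⁽ᵏ⁾(0)`. The Neumann
kernel has mass one on `[0,1]` by the method of images: as `n` ranges over `ℤ` and `y` over
`[0,1]`, the points `x - y + 2n` and `x + y + 2n` sweep out `ℝ` exactly once, so
`∫₀¹ p(t,x,y) dy = ∫_ℝ g_t = 1`. Thus `P_t` is sub-Markovian on `[0,1]ᵏ` and
`P_t F⁽ᵏ⁾(0) ≤ sup F⁽ᵏ⁾(0)`.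
-/

open MeasureTheory Real

/-- Centered Gaussian density with variance `t`. -/
noncomputable def gaussD (t x : ℝ) : ℝ :=
  (2 * Real.pi * t) ^ (-(1:ℝ)/2) * Real.exp (-x ^ 2 / (2 * t))

/-- The Neumann heat kernel on `[0,1]` (transition density of reflected BM). -/
noncomputable def heatK (t x y : ℝ) : ℝ :=
  ∑' n : ℤ, (gaussD t (x - y + 2 * (n : ℝ)) + gaussD t (x + y + 2 * (n : ℝ)))

/-- The unit box `[0,1]^k`. -/
def unitBox (k : ℕ) : Set (Fin k → ℝ) := Set.univ.pi fun _ => Set.Icc (0:ℝ) 1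

/-- The `k`-fold Neumann heat semigroup:
`P^(k)_t Φ(x) = ∫_{[0,1]^k} Φ(y) ∏ᵢ p(t,xᵢ,yᵢ) dy` for `t > 0`, and `P^(k)_0 Φ = Φ`. -/
noncomputable def Ptk (k : ℕ) (t : ℝ) (Φ : (Fin k → ℝ) → ℝ) (x : Fin k → ℝ) : ℝ :=
  if t = 0 then Φ x else ∫ y in unitBox k, Φ y * ∏ i, heatK t (x i) (y i)

open Set ProbabilityTheory
open scoped ENNReal

section MethodOfImages

lemma setLIntegral_Icc_sub_add_eq_setLIntegral_Ioc {f : ℝ → ℝ≥0∞} (hf : Measurable f) (c : ℝ) :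
    ∫⁻ y in Icc 0 1, (f (c - y) + f (c + y)) = ∫⁻ u in Ioc (c - 1) (c + 1), f u := by
  have hsub : ∫⁻ y in Icc 0 1, f (c - y) = ∫⁻ u in Ioc (c - 1) c, f u := by
    rw [setLIntegral_congr Ioc_ae_eq_Icc,
      ← (volume.measurePreserving_sub_left c).setLIntegral_comp_preimage_emb
        (MeasurableEquiv.subLeft c).measurableEmbedding f (Icc (c - 1) c),
      preimage_const_sub_Icc]
    simp
  have hadd : ∫⁻ y in Icc 0 1, f (c + y) = ∫⁻ u in Ioc c (c + 1), f u := by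
    rw [setLIntegral_congr Ioc_ae_eq_Icc,
      ← (measurePreserving_add_left volume c).setLIntegral_comp_preimage_emb
        (MeasurableEquiv.addLeft c).measurableEmbedding f (Icc c (c + 1)),
      preimage_const_add_Icc]
    simp
  rw [lintegral_add_left (by fun_prop : Measurable fun y => f (c - y)), hsub, hadd,
    ← lintegral_union measurableSet_Ioc (Ioc_disjoint_Ioc_of_le le_rfl),
    Ioc_union_Ioc_eq_Ioc (by linarith) (by linarith)]

lemma tsum_setLIntegral_Ioc_add_zsmul (μ : Measure ℝ) {p : ℝ} (hp : 0 < p) (a : ℝ)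
    (f : ℝ → ℝ≥0∞) :
    ∑' n : ℤ, ∫⁻ u in Ioc (a + n • p) (a + (n + 1) • p), f u ∂μ = ∫⁻ u, f u ∂μ := by
  rw [← lintegral_iUnion (fun _ => measurableSet_Ioc) (pairwise_disjoint_Ioc_add_zsmul a p),
    iUnion_Ioc_add_zsmul hp, Measure.restrict_univ]

lemma setLIntegral_Icc_tsum_images {f : ℝ → ℝ≥0∞} (hf : Measurable f) (x : ℝ) :
    ∫⁻ y in Icc 0 1, ∑' n : ℤ, (f (x - y + 2 * n) + f (x + y + 2 * n)) = ∫⁻ u, f u := by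
  rw [lintegral_tsum fun n => by fun_prop]
  rw [← tsum_setLIntegral_Ioc_add_zsmul volume two_pos (x - 1) f]
  refine tsum_congr fun n => ?_
  have hIoc : Ioc (x - 1 + n • (2 : ℝ)) (x - 1 + (n + 1) • 2) =
      Ioc (x + 2 * n - 1) (x + 2 * n + 1) := by
    simp only [zsmul_eq_mul]
    push_cast
    congr 1 <;> ring
  rw [hIoc, ← setLIntegral_Icc_sub_add_eq_setLIntegral_Ioc hf]
  congr! 4 with y <;> ring

end MethodOfImages

section HeatKernel

variable {t : ℝ}

lemma gaussD_eq_gaussianPDFReal (ht : 0 < t) : gaussD t = gaussianPDFReal 0 t.toNNReal := by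
  ext x
  rw [gaussD, gaussianPDFReal, Real.coe_toNNReal _ ht.le, sub_zero, sqrt_eq_rpow,
    ← rpow_neg (by positivity)]
  norm_num

lemma gaussD_nonneg (ht : 0 < t) (x : ℝ) : 0 ≤ gaussD t x :=
  gaussD_eq_gaussianPDFReal ht ▸ gaussianPDFReal_nonneg ..

lemma heatK_nonneg (ht : 0 < t) (x y : ℝ) : 0 ≤ heatK t x y :=
  tsum_nonneg fun _ => add_nonneg (gaussD_nonneg ht _) (gaussD_nonneg ht _)

lemma measurable_heatK (t x : ℝ) : Measurable (heatK t x) :=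
  Measurable.tsum fun _ => by unfold gaussD; fun_prop

lemma ofReal_tsum_le_tsum_ofReal {ι : Type*} {f : ι → ℝ} (hf0 : ∀ i, 0 ≤ f i) :
    ENNReal.ofReal (∑' i, f i) ≤ ∑' i, ENNReal.ofReal (f i) := by
  by_cases hf : Summable f
  · exact (ENNReal.ofReal_tsum_of_nonneg hf0 hf).le
  · simp [tsum_eq_zero_of_not_summable hf]

lemma lintegral_ofReal_heatK_le_one (ht : 0 < t) (x : ℝ) :
    ∫⁻ y in Icc 0 1, ENNReal.ofReal (heatK t x y) ≤ 1 := by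
  have hg : Measurable fun u => ENNReal.ofReal (gaussD t u) := by unfold gaussD; fun_prop
  calc ∫⁻ y in Icc 0 1, ENNReal.ofReal (heatK t x y)
      ≤ ∫⁻ y in Icc 0 1, ∑' n : ℤ, (ENNReal.ofReal (gaussD t (x - y + 2 * n))
          + ENNReal.ofReal (gaussD t (x + y + 2 * n))) := by
        refine lintegral_mono fun y => (ofReal_tsum_le_tsum_ofReal fun n =>
          add_nonneg (gaussD_nonneg ht _) (gaussD_nonneg ht _)).trans_eq ?_
        exact tsum_congr fun n => ENNReal.ofReal_add (gaussD_nonneg ht _) (gaussD_nonneg ht _)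
    _ = 1 := by
      rw [setLIntegral_Icc_tsum_images hg, gaussD_eq_gaussianPDFReal ht]
      exact lintegral_gaussianPDFReal_eq_one 0 (by simpa using ht)

lemma integrableOn_heatK (ht : 0 < t) (x : ℝ) : IntegrableOn (heatK t x) (Icc 0 1) :=
  ⟨(measurable_heatK t x).aestronglyMeasurable,
    (hasFiniteIntegral_iff_ofReal (ae_of_all _ (heatK_nonneg ht x))).2
      ((lintegral_ofReal_heatK_le_one ht x).trans_lt ENNReal.one_lt_top)⟩

lemma setIntegral_heatK_le_one (ht : 0 < t) (x : ℝ) : ∫ y in Icc 0 1, heatK t x y ≤ 1 := by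
  rw [integral_eq_lintegral_of_nonneg_ae (ae_of_all _ (heatK_nonneg ht x))
    (measurable_heatK t x).aestronglyMeasurable]
  exact ENNReal.toReal_le_of_le_ofReal zero_le_one
    ((lintegral_ofReal_heatK_le_one ht x).trans_eq ENNReal.ofReal_one.symm)

end HeatKernel

section UnitBox

variable {k : ℕ}

lemma measurableSet_unitBox (k : ℕ) : MeasurableSet (unitBox k) :=
  MeasurableSet.univ_pi fun _ => measurableSet_Icc

lemma isCompact_unitBox (k : ℕ) : IsCompact (unitBox k) :=
  isCompact_univ_pi fun _ => isCompact_Icc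

lemma snoc_mem_unitBox {y : Fin k → ℝ} (hy : y ∈ unitBox k) {z : ℝ} (hz : z ∈ Icc 0 1) :
    Fin.snoc y z ∈ unitBox (k + 1) := by
  intro i _
  induction i using Fin.lastCases with
  | last => simpa using hz
  | cast j => simpa using hy j (mem_univ j)

lemma volume_restrict_unitBox :
    volume.restrict (unitBox k) = Measure.pi fun _ => volume.restrict (Icc (0 : ℝ) 1) := by
  rw [unitBox, volume_pi, Measure.restrict_pi_pi]

lemma setIntegral_unitBox_prod (f : Fin k → ℝ → ℝ) :
    ∫ y in unitBox k, ∏ i, f i (y i) = ∏ i, ∫ u in Icc 0 1, f i u := by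
  rw [volume_restrict_unitBox, integral_fintype_prod_eq_prod]

lemma integrableOn_unitBox_prod {f : Fin k → ℝ → ℝ} (hf : ∀ i, IntegrableOn (f i) (Icc 0 1)) :
    IntegrableOn (fun y => ∏ i, f i (y i)) (unitBox k) := by
  rw [IntegrableOn, volume_restrict_unitBox]
  exact Integrable.fintype_prod hf

end UnitBox

section HeatSemigroup

variable {k : ℕ} {t : ℝ} {Φ : (Fin k → ℝ) → ℝ} {x : Fin k → ℝ}

lemma Ptk_nonneg (ht : 0 ≤ t) (hΦ : ∀ y ∈ unitBox k, 0 ≤ Φ y) (hx : x ∈ unitBox k) :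
    0 ≤ Ptk k t Φ x := by
  unfold Ptk
  split_ifs with h0
  · exact hΦ x hx
  · exact setIntegral_nonneg (measurableSet_unitBox k) fun y hy =>
      mul_nonneg (hΦ y hy) (Finset.prod_nonneg fun i _ =>
        heatK_nonneg (lt_of_le_of_ne ht (Ne.symm h0)) _ _)

lemma Ptk_le_of_le {M : ℝ} (ht : 0 ≤ t) (hΦ : ∀ y ∈ unitBox k, 0 ≤ Φ y)
    (hΦM : ∀ y ∈ unitBox k, Φ y ≤ M) (hx : x ∈ unitBox k) : Ptk k t Φ x ≤ M := by
  unfold Ptk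
  split_ifs with h0
  · exact hΦM x hx
  have ht' : 0 < t := lt_of_le_of_ne ht (Ne.symm h0)
  set K : (Fin k → ℝ) → ℝ := fun y => ∏ i, heatK t (x i) (y i)
  have hK0 : ∀ y, 0 ≤ K y := fun y => Finset.prod_nonneg fun i _ => heatK_nonneg ht' _ _
  have hK1 : ∫ y in unitBox k, K y ≤ 1 := by
    rw [setIntegral_unitBox_prod fun i => heatK t (x i)]
    exact Finset.prod_le_one (fun i _ => setIntegral_nonneg measurableSet_Icc
      fun y _ => heatK_nonneg ht' _ y) fun i _ => setIntegral_heatK_le_one ht' (x i)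
  have hbox := ae_restrict_mem (μ := volume) (measurableSet_unitBox k)
  calc ∫ y in unitBox k, Φ y * K y
      ≤ ∫ y in unitBox k, M * K y :=
        integral_mono_of_nonneg (hbox.mono fun y hy => mul_nonneg (hΦ y hy) (hK0 y))
          ((integrableOn_unitBox_prod fun i => integrableOn_heatK ht' (x i)).const_mul M)
          (hbox.mono fun y hy => mul_le_mul_of_nonneg_right (hΦM y hy) (hK0 y))
    _ = M * ∫ y in unitBox k, K y := integral_const_mul M K
    _ ≤ M := mul_le_of_le_one_right ((hΦ x hx).trans (hΦM x hx)) hK1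

lemma intervalIntegral_Ptk_nonneg {G : ℝ → (Fin k → ℝ) → ℝ} (ht : 0 ≤ t)
    (hG : ∀ s ∈ Icc 0 t, ∀ y ∈ unitBox k, 0 ≤ G s y) (hx : x ∈ unitBox k) :
    0 ≤ ∫ s in 0..t, Ptk k (t - s) (G s) x :=
  intervalIntegral.integral_nonneg ht fun s hs => Ptk_nonneg (sub_nonneg.2 hs.2) (hG s hs) hx

end HeatSemigroup

section Hierarchy

variable {k : ℕ} {τ : ℝ} {y : Fin k → ℝ}

/-- The operator `R` of the hierarchy, with kernel time `τ = 2 / N²`. -/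
noncomputable def hierarchyR (τ : ℝ) (Φ : (Fin (k + 1) → ℝ) → ℝ) (y : Fin k → ℝ) : ℝ :=
  ∑ i : Fin k, ∫ z in (0 : ℝ)..1, Φ (Fin.snoc y z) * heatK τ (y i) z

/-- The operator `Q` of the hierarchy, with kernel time `τ = 2 / N²`. -/
noncomputable def hierarchyQ (τ : ℝ) (Φ : (Fin k → ℝ) → ℝ) (y : Fin k → ℝ) : ℝ :=
  ∑ i : Fin k, ∑ j : Fin k, if i < j then Φ y * heatK τ (y i) (y j) else 0

lemma hierarchyR_nonneg {Φ : (Fin (k + 1) → ℝ) → ℝ} (hτ : 0 < τ)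
    (hΦ : ∀ w ∈ unitBox (k + 1), 0 ≤ Φ w) (hy : y ∈ unitBox k) : 0 ≤ hierarchyR τ Φ y :=
  Finset.sum_nonneg fun _ _ => intervalIntegral.integral_nonneg zero_le_one fun _ hz =>
    mul_nonneg (hΦ _ (snoc_mem_unitBox hy hz)) (heatK_nonneg hτ _ _)

lemma hierarchyQ_nonneg {Φ : (Fin k → ℝ) → ℝ} (hτ : 0 < τ) (hΦ : 0 ≤ Φ y) :
    0 ≤ hierarchyQ τ Φ y :=
  Finset.sum_nonneg fun i _ => Finset.sum_nonneg fun j _ => by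
    split_ifs
    exacts [mul_nonneg hΦ (heatK_nonneg hτ _ _), le_rfl]

end Hierarchy

/-- comparison for the finite BBGKY hierarchy: nonnegative solutions of
the `N`-particle hierarchy (with annihilation terms `R` and `Q`) are dominated by the
free heat flow of their initial data, and in particular by the sup of the initial data. -/
theorem finite_hierarchy_comparison :
    ∀ N : ℕ, 2 ≤ N →
      ∀ F : (k : ℕ) → ℝ → (Fin k → ℝ) → ℝ,
        (∀ k : ℕ, 1 ≤ k → k ≤ N →
          ContinuousOn (fun q : ℝ × (Fin k → ℝ) => F k q.1 q.2)
            (Set.Ici (0:ℝ) ×ˢ unitBox k)) →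
        (∀ k : ℕ, 1 ≤ k → k ≤ N → ∀ t ∈ Set.Ici (0:ℝ), ∀ x ∈ unitBox k, 0 ≤ F k t x) →
        (∀ k : ℕ, N < k → ∀ t : ℝ, ∀ x : Fin k → ℝ, F k t x = 0) →
        (∀ k : ℕ, 1 ≤ k → k ≤ N → ∀ t ∈ Set.Ici (0:ℝ), ∀ x ∈ unitBox k,
          F k t x = Ptk k t (F k 0) x
            - ∫ s in (0:ℝ)..t,
                Ptk k (t - s)
                  (fun y =>
                    (∑ i : Fin k, ∫ z in (0:ℝ)..1,
                      F (k+1) s (Fin.snoc y z) * heatK (2 / (N : ℝ) ^ 2) (y i) z)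
                    + (1 / (N : ℝ)) * ∑ i : Fin k, ∑ j : Fin k,
                        if i < j then F k s y * heatK (2 / (N : ℝ) ^ 2) (y i) (y j)
                        else 0) x) →
        ∀ k : ℕ, 1 ≤ k → k ≤ N → ∀ t ∈ Set.Ici (0:ℝ), ∀ x ∈ unitBox k,
          F k t x ≤ Ptk k t (F k 0) x ∧ F k t x ≤ sSup (F k 0 '' unitBox k) := by
  intro N hN F hcont hnn hzero hmild k hk1 hkN t ht x hx
  have hτ : (0 : ℝ) < 2 / (N : ℝ) ^ 2 := by
    have : (0 : ℝ) < N := by exact_mod_cast (by omega : 0 < N)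
    positivity
  have hsource : ∀ s ∈ Icc 0 t, ∀ y ∈ unitBox k, 0 ≤ hierarchyR (2 / (N : ℝ) ^ 2) (F (k + 1) s) y
      + 1 / (N : ℝ) * hierarchyQ (2 / (N : ℝ) ^ 2) (F k s) y := by
    intro s hs y hy
    refine add_nonneg (hierarchyR_nonneg hτ (fun w hw => ?_) hy)
      (mul_nonneg (by positivity) (hierarchyQ_nonneg hτ (hnn k hk1 hkN s hs.1 y hy)))
    rcases Nat.lt_or_ge N (k + 1) with hk | hk
    · exact (hzero _ hk s w).ge
    · exact hnn (k + 1) (by omega) hk s hs.1 w hw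
  have hdom : F k t x ≤ Ptk k t (F k 0) x :=
    (hmild k hk1 hkN t ht x hx).trans_le (sub_le_self _ (intervalIntegral_Ptk_nonneg ht hsource hx))
  have hbdd : BddAbove (F k 0 '' unitBox k) := (isCompact_unitBox k).bddAbove_image <|
    (hcont k hk1 hkN).comp (Continuous.prodMk_right 0).continuousOn fun y hy => ⟨self_mem_Ici, hy⟩
  exact ⟨hdom, hdom.trans (Ptk_le_of_le ht (hnn k hk1 hkN 0 self_mem_Ici)
    (fun y hy => le_csSup hbdd (mem_image_of_mem _ hy)) hx)⟩
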